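/- arXiv:1001.2755 — 5 statements merged into one kernel-verified Lean document; each statement's English description precedes it below -/
import Mathlib

section
/- Let H1, H2 be Hilbert spaces, S a weak-* closed subspace of B(H1), and T ∈ B(H1 ⊗ H2). If for every weak-* continuous functional ω on B(H2) the left slice L_ω(T) belongs to S, then T belongs to the weak-* closed subspace of B(H1 ⊗ H2) generated by elementary tensors A ⊗ B with A ∈ S, B ∈ B(H2). -/
noncomputable section

/-- The weak-* closed linear span of a set of operators on a Hilbert space,
described via annihilating (finite sums of) vector functionals; for linear
subspaces this coincides with the weak-* (= weak operator topology) closure. -/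
def wspan {E : Type*} [NormedAddCommGroup E] [InnerProductSpace ℂ E]
    (S : Set (E →L[ℂ] E)) : Set (E →L[ℂ] E) :=
  {T | ∀ (n : ℕ) (x y : Fin n → E),
    (∀ A ∈ S, (∑ i, (inner ℂ (A (x i)) (y i) : ℂ)) = 0) →
      (∑ i, (inner ℂ (T (x i)) (y i) : ℂ)) = 0}

/-- The reflexive hull of a set of operators. -/
def RefHull {E : Type*} [NormedAddCommGroup E] [InnerProductSpace ℂ E]
    (S : Set (E →L[ℂ] E)) : Set (E →L[ℂ] E) :=
  {T | ∀ x y : E, (∀ A ∈ S, (inner ℂ (A x) y : ℂ) = 0) → (inner ℂ (T x) y : ℂ) = 0}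

/-- An identification of the Hilbert space `H` with the Hilbert-space tensor
product `H1 ⊗ H2`: a bilinear map on vectors whose range spans a dense subspace,
multiplicative on inner products, together with the induced tensor product of
operators. -/
structure TensorSetup (H1 H2 H : Type*)
    [NormedAddCommGroup H1] [InnerProductSpace ℂ H1]
    [NormedAddCommGroup H2] [InnerProductSpace ℂ H2]
    [NormedAddCommGroup H] [InnerProductSpace ℂ H] where
  t : H1 →ₗ[ℂ] H2 →ₗ[ℂ] H
  inner_t : ∀ ξ η x y, (inner ℂ (t ξ x) (t η y) : ℂ) = (inner ℂ ξ η : ℂ) * (inner ℂ x y : ℂ)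
  dense_t : (Submodule.span ℂ {z | ∃ ξ x, z = t ξ x}).topologicalClosure = ⊤
  top : (H1 →L[ℂ] H1) → (H2 →L[ℂ] H2) → (H →L[ℂ] H)
  top_apply : ∀ A B ξ x, top A B (t ξ x) = t (A ξ) (B x)

/-- The reflexive hull relative to elementary tensors, `Ref_e`. -/
def RefE {H1 H2 H : Type*} [NormedAddCommGroup H1] [InnerProductSpace ℂ H1]
    [NormedAddCommGroup H2] [InnerProductSpace ℂ H2]
    [NormedAddCommGroup H] [InnerProductSpace ℂ H]
    (ts : TensorSetup H1 H2 H) (S : Set (H →L[ℂ] H)) : Set (H →L[ℂ] H) :=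
  {T | ∀ (ξ η : H1) (x y : H2),
    (∀ A ∈ S, (inner ℂ (A (ts.t ξ x)) (ts.t η y) : ℂ) = 0) →
      (inner ℂ (T (ts.t ξ x)) (ts.t η y) : ℂ) = 0}

variable {H1 H2 H : Type*}
  [NormedAddCommGroup H1] [InnerProductSpace ℂ H1] [CompleteSpace H1]
  [NormedAddCommGroup H2] [InnerProductSpace ℂ H2] [CompleteSpace H2]
  [NormedAddCommGroup H] [InnerProductSpace ℂ H] [CompleteSpace H]

/-! Expand vectors of `H ≅ H1 ⊗ H2` along a Hilbert basis `(e k)` of `H2`: `u = ∑ₖ ξₖ ⊗ eₖ`,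
since the isometries `ξ ↦ ξ ⊗ eₖ` have mutually orthogonal ranges with dense span.
A vector functional `X ↦ ⟪X u, v⟫` then splits into the matrix coefficients
`⟪X (ξₖ ⊗ eₖ), ηₗ ⊗ eₗ⟫`. For `X = T` these are `⟪A ξₖ, ηₗ⟫` with `A ∈ S` the slice of `T` by
`B ↦ ⟪B eₖ, eₗ⟫`, and for `X = A ⊗ |eₗ⟩⟨eₖ|` the functional collapses to exactly the same
number, so any finite sum of vector functionals annihilating `S ⊗ B(H2)` annihilates `T`. -/

open InnerProductSpace

local notation "⟪" x ", " y "⟫" => (inner ℂ x y : ℂ)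

theorem HasSum.inner_const {ι E : Type*} [NormedAddCommGroup E] [InnerProductSpace ℂ E]
    {f : ι → E} {a : E} (hf : HasSum f a) (z : E) : HasSum (fun i => ⟪f i, z⟫) ⟪a, z⟫ := by
  simpa [inner_conj_symm] using (hf.mapL (innerSL ℂ z)).star

theorem sum_inner_apply_eq_tsum_tsum {ι J E : Type*} [Fintype J]
    [NormedAddCommGroup E] [InnerProductSpace ℂ E] (X : E →L[ℂ] E) {u v : J → E}
    {f g : J → ι → E} (hu : ∀ j, HasSum (f j) (u j)) (hv : ∀ j, HasSum (g j) (v j)) :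
    ∑ j, ⟪X (u j), v j⟫ = ∑' k, ∑' l, ∑ j, ⟪X (f j k), g j l⟫ := by
  have hrow : ∀ k, HasSum (fun l => ∑ j, ⟪X (f j k), g j l⟫) (∑ j, ⟪X (f j k), v j⟫) :=
    fun k => hasSum_sum fun j _ => (hv j).mapL (innerSL ℂ (X (f j k)))
  have hcol : HasSum (fun k => ∑ j, ⟪X (f j k), v j⟫) (∑ j, ⟪X (u j), v j⟫) :=
    hasSum_sum fun j _ => ((hu j).mapL X).inner_const (v j)
  simp only [(hrow _).tsum_eq, hcol.tsum_eq]

namespace TensorSetup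

variable (ts : TensorSetup H1 H2 H)

omit [CompleteSpace H1] [CompleteSpace H2] [CompleteSpace H] in
theorem norm_t (ξ : H1) (x : H2) : ‖ts.t ξ x‖ = ‖ξ‖ * ‖x‖ := by
  have h := ts.inner_t ξ ξ x x
  simp only [inner_self_eq_norm_sq_to_K] at h
  rw [← pow_left_inj₀ (norm_nonneg _) (by positivity) two_ne_zero, mul_pow]
  exact_mod_cast h

omit [CompleteSpace H1] [CompleteSpace H2] [CompleteSpace H] in
theorem inner_top_t (A : H1 →L[ℂ] H1) (B : H2 →L[ℂ] H2) (ξ η : H1) (x y : H2) :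
    ⟪ts.top A B (ts.t ξ x), ts.t η y⟫ = ⟪A ξ, η⟫ * ⟪B x, y⟫ := by
  rw [ts.top_apply, ts.inner_t]

omit [CompleteSpace H1] [CompleteSpace H2] [CompleteSpace H] in
theorem continuous_t (ξ : H1) : Continuous (ts.t ξ) :=
  AddMonoidHomClass.continuous_of_bound (ts.t ξ) ‖ξ‖ fun x => (ts.norm_t ξ x).le

def tensorRight {x : H2} (hx : ‖x‖ = 1) : H1 →ₗᵢ[ℂ] H where
  toLinearMap := ts.t.flip x
  norm_map' ξ := by simp [ts.norm_t, hx]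

omit [CompleteSpace H1] [CompleteSpace H2] [CompleteSpace H] in
@[simp]
theorem tensorRight_apply {x : H2} (hx : ‖x‖ = 1) (ξ : H1) : ts.tensorRight hx ξ = ts.t ξ x :=
  rfl

omit [CompleteSpace H1] [CompleteSpace H2] [CompleteSpace H] in
theorem orthogonalFamily_tensorRight {ι : Type*} {e : ι → H2} (he : Orthonormal ℂ e) :
    OrthogonalFamily ℂ (fun _ : ι => H1) fun k => ts.tensorRight (he.1 k) := by
  intro k l hkl ξ η
  simp [ts.inner_t, he.2 hkl]

omit [CompleteSpace H2] in
theorem isHilbertSum_tensorRight {ι : Type*} (b : HilbertBasis ι ℂ H2) :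
    IsHilbertSum ℂ (fun _ : ι => H1) fun k => ts.tensorRight (b.orthonormal.1 k) := by
  refine .mk (ts.orthogonalFamily_tensorRight b.orthonormal) ?_
  set M := (⨆ k, LinearMap.range (ts.tensorRight (b.orthonormal.1 k)).toLinearMap).topologicalClosure
  have hM : IsClosed (M : Set H) := Submodule.isClosed_topologicalClosure _
  have hbM : ∀ ξ k, ts.t ξ (b k) ∈ M := fun ξ k =>
    Submodule.le_topologicalClosure _ (Submodule.mem_iSup_of_mem k ⟨ξ, rfl⟩)
  have htM : ∀ ξ x, ts.t ξ x ∈ M := by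
    intro ξ x
    let N : Submodule ℂ H2 := M.comap (ts.t ξ)
    have hN : ⊤ ≤ N := b.dense_span.ge.trans <| Submodule.topologicalClosure_minimal _
      (Submodule.span_le.mpr <| Set.range_subset_iff.mpr (hbM ξ)) (hM.preimage (ts.continuous_t ξ))
    exact hN Submodule.mem_top
  rw [← ts.dense_t]
  exact Submodule.topologicalClosure_minimal _
    (Submodule.span_le.mpr fun _ ⟨ξ, x, hz⟩ => hz ▸ htM ξ x) hM

omit [CompleteSpace H2] in
theorem exists_hasSum_t {ι : Type*} (b : HilbertBasis ι ℂ H2) (w : H) :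
    ∃ ξ : ι → H1, HasSum (fun k => ts.t (ξ k) (b k)) w := by
  let hV := ts.isHilbertSum_tensorRight b
  refine ⟨hV.linearIsometryEquiv w, ?_⟩
  simpa using hV.hasSum_linearIsometryEquiv_symm (hV.linearIsometryEquiv w)

omit [CompleteSpace H1] [CompleteSpace H2] [CompleteSpace H] in
theorem sum_inner_top_rankOne {ι J : Type*} [Fintype J] {e : ι → H2} (he : Orthonormal ℂ e)
    {u v : J → H} {ξ η : J → ι → H1} (hu : ∀ j, HasSum (fun k => ts.t (ξ j k) (e k)) (u j))
    (hv : ∀ j, HasSum (fun l => ts.t (η j l) (e l)) (v j)) (A : H1 →L[ℂ] H1) (k l : ι) :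
    ∑ j, ⟪ts.top A (rankOne ℂ (e l) (e k)) (u j), v j⟫ = ∑ j, ⟪A (ξ j k), η j l⟫ := by
  classical
  rw [sum_inner_apply_eq_tsum_tsum _ hu hv]
  simp only [ts.inner_top_t, rankOne_apply, inner_smul_left, orthonormal_iff_ite.mp he,
    apply_ite (starRingEnd ℂ), map_one, map_zero, mul_ite, mul_one, mul_zero, Finset.sum_ite_irrel,
    Finset.sum_const_zero, eq_comm (a := k), eq_comm (a := l), tsum_ite_eq]

end TensorSetup

/-- A normal functional on `B(H2)` is precisely one of the form `B ↦ ∑' i, ⟪B (x i), y i⟫`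
with `∑ ‖x i‖² < ∞`, `∑ ‖y i‖² < ∞`. -/
theorem stmt0_kraus_slice_lemma_general
    (ts : TensorSetup H1 H2 H)
    (S : Submodule ℂ (H1 →L[ℂ] H1))
    (T : H →L[ℂ] H)
    (hT : ∀ x y : ℕ → H2, Summable (fun i => ‖x i‖ ^ 2) → Summable (fun i => ‖y i‖ ^ 2) →
      ∃ A ∈ S, ∀ ξ η : H1,
        (inner ℂ (A ξ) η : ℂ) = ∑' i, (inner ℂ (T (ts.t ξ (x i))) (ts.t η (y i)) : ℂ)) :
    T ∈ wspan {X | ∃ A ∈ S, ∃ B : H2 →L[ℂ] H2, X = ts.top A B} := by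
  have hslice : ∀ x y : H2, ∃ A ∈ S, ∀ ξ η : H1, ⟪A ξ, η⟫ = ⟪T (ts.t ξ x), ts.t η y⟫ := by
    intro x y
    have hsingle : ∀ z : H2, Summable fun i => ‖Pi.single (M := fun _ => H2) 0 z i‖ ^ 2 := fun z =>
      summable_of_ne_finset_zero (s := {0}) fun i hi => by simp [Finset.mem_singleton.not.mp hi]
    obtain ⟨A, hAS, hA⟩ := hT _ _ (hsingle x) (hsingle y)
    refine ⟨A, hAS, fun ξ η => ?_⟩
    rw [hA, tsum_eq_single 0 fun i hi => by simp [hi]]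
    simp
  choose A hAS hA using hslice
  intro n u v hann
  obtain ⟨_, b, -⟩ := exists_hilbertBasis ℂ H2
  choose ξ hξ using fun j => ts.exists_hasSum_t b (u j)
  choose η hη using fun j => ts.exists_hasSum_t b (v j)
  have hcoeff : ∀ k l, ∑ j, ⟪T (ts.t (ξ j k) (b k)), ts.t (η j l) (b l)⟫ = 0 := fun k l => by
    simp_rw [← hA, ← ts.sum_inner_top_rankOne b.orthonormal hξ hη]
    exact hann _ ⟨_, hAS (b k) (b l), _, rfl⟩
  simp [sum_inner_apply_eq_tsum_tsum T hξ hη, hcoeff]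

/-- Kraus's slice-map lemma: if every left slice of `T` by a weak-* continuous
(normal) functional on `B(H2)` lies in the weak-* closed subspace `S ⊆ B(H1)`,
then `T` lies in `S ⊗ B(H2)`.  A normal functional on `B(H2)` is precisely one
of the form `B ↦ ∑' i, ⟪B (x i), y i⟫` with `∑ ‖x i‖² < ∞`, `∑ ‖y i‖² < ∞`. -/
theorem stmt0_kraus_slice_lemma
    (ts : TensorSetup H1 H2 H)
    (S : Submodule ℂ (H1 →L[ℂ] H1))
    (hS : wspan (S : Set (H1 →L[ℂ] H1)) = (S : Set (H1 →L[ℂ] H1)))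
    (T : H →L[ℂ] H)
    (hT : ∀ x y : ℕ → H2, Summable (fun i => ‖x i‖ ^ 2) → Summable (fun i => ‖y i‖ ^ 2) →
      ∃ A ∈ S, ∀ ξ η : H1,
        (inner ℂ (A ξ) η : ℂ) = ∑' i, (inner ℂ (T (ts.t ξ (x i))) (ts.t η (y i)) : ℂ)) :
    T ∈ wspan {X | ∃ A ∈ S, ∃ B : H2 →L[ℂ] H2, X = ts.top A B} :=
  stmt0_kraus_slice_lemma_general ts S T hT
end
end

section
/- Let H1, H2 be Hilbert spaces, S ⊆ B(H1 ⊗ H2) a subspace, and ω = ω_{ξ,η} a vector functional on B(H1). Then R_ω(Ref_e S) ⊆ Ref R_ω(S), where R_ω denotes the right slice map. -/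
noncomputable section

variable {H1 H2 H : Type*}
  [NormedAddCommGroup H1] [InnerProductSpace ℂ H1] [CompleteSpace H1]
  [NormedAddCommGroup H2] [InnerProductSpace ℂ H2] [CompleteSpace H2]
  [NormedAddCommGroup H] [InnerProductSpace ℂ H] [CompleteSpace H]

/-! The slice of `A ∈ S` is `(η ⊗ ·)* ∘ A ∘ (ξ ⊗ ·)`, so it lies in `R_ω(S)`. Hence a vector
functional `ω_{x,y}` annihilating `R_ω(S)` yields the elementary functional `ω_{ξ⊗x, η⊗y}`
annihilating `S`, which then annihilates `T ∈ Ref_e S`, i.e. `ω_{x,y}` annihilates `R_ω(T)`. -/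

section Slice

variable {K₁ K₂ K : Type*}
  [NormedAddCommGroup K₁] [InnerProductSpace ℂ K₁]
  [NormedAddCommGroup K₂] [InnerProductSpace ℂ K₂]
  [NormedAddCommGroup K] [InnerProductSpace ℂ K]

namespace TensorSetup

variable (ts : TensorSetup K₁ K₂ K)

theorem norm_t_apply (v : K₁) (x : K₂) : ‖ts.t v x‖ = ‖v‖ * ‖x‖ := by
  have h := ts.inner_t v v x x
  simp only [inner_self_eq_norm_sq_to_K] at h
  have hsq : ‖ts.t v x‖ ^ 2 = (‖v‖ * ‖x‖) ^ 2 := by rw [mul_pow]; exact_mod_cast h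
  exact (sq_eq_sq₀ (norm_nonneg _) (by positivity)).mp hsq

/-- `x ↦ v ⊗ x` as a bounded operator. -/
def tL (v : K₁) : K₂ →L[ℂ] K :=
  (ts.t v).mkContinuous ‖v‖ fun x => (ts.norm_t_apply v x).le

@[simp]
theorem tL_apply (v : K₁) (x : K₂) : ts.tL v x = ts.t v x := rfl

/-- The right slice `R_ω(A)` of `A` by the vector functional `ω = ω_{ξ,η}`. -/
def slice [CompleteSpace K₂] [CompleteSpace K] (ξ η : K₁) (A : K →L[ℂ] K) : K₂ →L[ℂ] K₂ :=
  (ts.tL η).adjoint ∘L A ∘L ts.tL ξ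

theorem inner_slice_apply [CompleteSpace K₂] [CompleteSpace K] (ξ η : K₁) (A : K →L[ℂ] K)
    (x y : K₂) : inner ℂ (ts.slice ξ η A x) y = inner ℂ (A (ts.t ξ x)) (ts.t η y) := by
  simp only [slice, ContinuousLinearMap.comp_apply, ContinuousLinearMap.adjoint_inner_left,
    tL_apply]

end TensorSetup

end Slice

/-- `hB` says that `B` is the slice `R_ω(T)` for `ω = ω_{ξ,η}`. -/
theorem stmt4_slice_of_refE
    (ts : TensorSetup H1 H2 H)
    (S : Set (H →L[ℂ] H)) (ξ η : H1)
    (T : H →L[ℂ] H) (hT : T ∈ RefE ts S)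
    (B : H2 →L[ℂ] H2)
    (hB : ∀ x y : H2, (inner ℂ (B x) y : ℂ) = (inner ℂ (T (ts.t ξ x)) (ts.t η y) : ℂ)) :
    B ∈ RefHull {C : H2 →L[ℂ] H2 | ∃ T' ∈ S, ∀ x y : H2,
        (inner ℂ (C x) y : ℂ) = (inner ℂ (T' (ts.t ξ x)) (ts.t η y) : ℂ)} := by
  intro x y hS
  rw [hB]
  refine hT ξ η x y fun A hA => ?_
  rw [← ts.inner_slice_apply]
  exact hS _ ⟨A, hA, ts.inner_slice_apply ξ η A⟩
end
end

section
/- Let P, Q be orthogonal projections on H1 ⊗ H2, and for a projection L let L̃ denote the projection onto the orthogonal complement of the closed span of {ξ ⊗ x : L(ξ ⊗ x) = 0}. Then Ref_e(Q·B(H1⊗H2)·P) = Q̃·B(H1⊗H2)·P̃. -/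
/-!
Testing `Q T P` against the vector functional `⟪· z, w⟫` of elementary tensors `z, w`
gives `⟪T (P z), Q w⟫`, and rank-one operators `T` show that all of these vanish exactly
when `P z = 0` or `Q w = 0`. So `X ∈ Ref_e (Q B P)` means that `X` kills the elementary
tensors killed by `P` and `X†` kills those killed by `Q`; by density of the elementary
tensors and continuity, this says `ker P̃ ≤ ker X` and `ker Q̃ ≤ ker X†`, which for the
projections `P̃, Q̃` is the same as `X = Q̃ X P̃`.
-/

noncomputable section

variable {H1 H2 H : Type*}
  [NormedAddCommGroup H1] [InnerProductSpace ℂ H1] [CompleteSpace H1]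
  [NormedAddCommGroup H2] [InnerProductSpace ℂ H2] [CompleteSpace H2]
  [NormedAddCommGroup H] [InnerProductSpace ℂ H] [CompleteSpace H]

open ContinuousLinearMap Submodule InnerProductSpace
open scoped InnerProductSpace

theorem Submodule.topologicalClosure_span_le_iff {R M : Type*} [Semiring R]
    [TopologicalSpace M] [AddCommMonoid M] [Module R M] [ContinuousAdd M]
    [ContinuousConstSMul R M] {s : Set M} {K : Submodule R M} (hK : IsClosed (K : Set M)) :
    (span R s).topologicalClosure ≤ K ↔ s ⊆ K :=
  ⟨fun h => subset_span.trans ((le_topologicalClosure _).trans h),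
    fun h => topologicalClosure_minimal _ (span_le.2 h) hK⟩

theorem ContinuousLinearMap.comp_eq_self_of_ker_le {R M N : Type*} [Ring R]
    [TopologicalSpace M] [AddCommGroup M] [Module R M]
    [TopologicalSpace N] [AddCommGroup N] [Module R N]
    {L : M →L[R] M} (hL : IsIdempotentElem L) {T : M →L[R] N}
    (h : LinearMap.ker (L : M →ₗ[R] M) ≤ LinearMap.ker (T : M →ₗ[R] N)) : T ∘L L = T := by
  ext v
  have hv : L (v - L v) = 0 := by
    rw [map_sub, show L (L v) = L v from congrArg (· v) hL.eq, sub_self]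
  have hTv : T (v - L v) = 0 := h hv
  rw [map_sub, sub_eq_zero] at hTv
  exact hTv.symm

section InnerProductSpace

variable {𝕜 E : Type*} [RCLike 𝕜] [NormedAddCommGroup E] [InnerProductSpace 𝕜 E]

theorem eq_zero_of_forall_inner_eq_zero_of_dense_span {s : Set E}
    (hs : (span 𝕜 s).topologicalClosure = ⊤) {u : E} (h : ∀ z ∈ s, ⟪z, u⟫_𝕜 = 0) : u = 0 := by
  have hle : (span 𝕜 s).topologicalClosure ≤ LinearMap.ker (innerSL 𝕜 u : E →ₗ[𝕜] 𝕜) :=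
    (topologicalClosure_span_le_iff (isClosed_ker _)).2 fun z hz => by
      simpa [inner_eq_zero_symm] using h z hz
  rw [hs] at hle
  simpa using hle (mem_top (x := u))

theorem exists_inner_apply_ne_zero {u v : E} (hu : u ≠ 0) (hv : v ≠ 0) :
    ∃ T : E →L[𝕜] E, ⟪T u, v⟫_𝕜 ≠ 0 :=
  ⟨rankOne 𝕜 v u, by simp [inner_smul_left, hu, hv]⟩

variable [CompleteSpace E]

theorem forall_inner_comp_apply_eq_zero_iff {P Q : E →L[𝕜] E} (hQ : IsSelfAdjoint Q)
    {z w : E} : (∀ T : E →L[𝕜] E, ⟪(Q ∘L T ∘L P) z, w⟫_𝕜 = 0) ↔ P z = 0 ∨ Q w = 0 := by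
  have hQw : ∀ a, ⟪Q a, w⟫_𝕜 = ⟪a, Q w⟫_𝕜 := fun a => hQ.isSymmetric a w
  simp only [comp_apply, hQw]
  constructor
  · intro h
    by_contra! hne
    obtain ⟨T, hT⟩ := exists_inner_apply_ne_zero (𝕜 := 𝕜) hne.1 hne.2
    exact hT (h T)
  · rintro (h | h) T <;> simp [h]

theorem exists_eq_comp_comp_iff {Pt Qt X : E →L[𝕜] E} (hPt : IsIdempotentElem Pt)
    (hQt : IsSelfAdjoint Qt) (hQt' : IsIdempotentElem Qt) :
    (∃ T, X = Qt ∘L T ∘L Pt) ↔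
      LinearMap.ker (Pt : E →ₗ[𝕜] E) ≤ LinearMap.ker (X : E →ₗ[𝕜] E) ∧
        LinearMap.ker (Qt : E →ₗ[𝕜] E) ≤ LinearMap.ker (adjoint X : E →ₗ[𝕜] E) := by
  constructor
  · rintro ⟨T, rfl⟩
    refine ⟨fun v hv => ?_, fun w hw => ?_⟩
    · have hv : Pt v = 0 := hv
      simp [hv]
    · have hw : Qt w = 0 := hw
      simp [adjoint_comp, hQt.adjoint_eq, hw]
  · rintro ⟨hP, hQ⟩
    have hXQt : Qt ∘L X = X := by
      simpa [adjoint_comp, hQt.adjoint_eq] using congrArg adjoint (comp_eq_self_of_ker_le hQt' hQ)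
    exact ⟨X, by rw [comp_eq_self_of_ker_le hPt hP, hXQt]⟩

end InnerProductSpace

namespace TensorSetup

variable {F₁ F₂ E : Type*} [NormedAddCommGroup F₁] [InnerProductSpace ℂ F₁]
  [NormedAddCommGroup F₂] [InnerProductSpace ℂ F₂] [NormedAddCommGroup E] [InnerProductSpace ℂ E]
  (ts : TensorSetup F₁ F₂ E)

theorem eq_zero_iff_forall_inner_t {u : E} : u = 0 ↔ ∀ ξ x, ⟪ts.t ξ x, u⟫_ℂ = 0 :=
  ⟨by rintro rfl; simp, fun h =>
    eq_zero_of_forall_inner_eq_zero_of_dense_span ts.dense_t (by rintro _ ⟨ξ, x, rfl⟩; exact h ξ x)⟩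

theorem closure_span_le_ker_iff (L X : E →L[ℂ] E) :
    (span ℂ {z | ∃ ξ x, z = ts.t ξ x ∧ L z = 0}).topologicalClosure ≤
        LinearMap.ker (X : E →ₗ[ℂ] E) ↔
      ∀ ξ η x y, L (ts.t ξ x) = 0 → ⟪X (ts.t ξ x), ts.t η y⟫_ℂ = 0 := by
  rw [topologicalClosure_span_le_iff (isClosed_ker _)]
  constructor
  · intro h ξ η x y hL
    have hX : X (ts.t ξ x) = 0 := h ⟨ξ, x, rfl, hL⟩
    simp [hX]
  · rintro h _ ⟨ξ, x, rfl, hL⟩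
    refine ts.eq_zero_iff_forall_inner_t.2 fun η y => ?_
    rw [inner_eq_zero_symm]
    exact h ξ η x y hL

theorem closure_span_le_ker_adjoint_iff [CompleteSpace E] (L X : E →L[ℂ] E) :
    (span ℂ {z | ∃ ξ x, z = ts.t ξ x ∧ L z = 0}).topologicalClosure ≤
        LinearMap.ker (adjoint X : E →ₗ[ℂ] E) ↔
      ∀ ξ η x y, L (ts.t η y) = 0 → ⟪X (ts.t ξ x), ts.t η y⟫_ℂ = 0 := by
  rw [topologicalClosure_span_le_iff (isClosed_ker _)]
  constructor
  · intro h ξ η x y hL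
    have hX : adjoint X (ts.t η y) = 0 := h ⟨η, y, rfl, hL⟩
    rw [← adjoint_inner_right, hX, inner_zero_right]
  · rintro h _ ⟨η, y, rfl, hL⟩
    exact ts.eq_zero_iff_forall_inner_t.2 fun ξ x =>
      (adjoint_inner_right X _ _).trans (h ξ η x y hL)

theorem mem_refE_corner_iff [CompleteSpace E] {P Q X : E →L[ℂ] E} (hQ : IsSelfAdjoint Q) :
    X ∈ RefE ts {X | ∃ T : E →L[ℂ] E, X = Q ∘L T ∘L P} ↔
      ∀ ξ η x y, P (ts.t ξ x) = 0 ∨ Q (ts.t η y) = 0 → ⟪X (ts.t ξ x), ts.t η y⟫_ℂ = 0 := by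
  simp only [RefE, Set.mem_ofPred_eq, forall_exists_index, forall_eq_apply_imp_iff,
    forall_inner_comp_apply_eq_zero_iff hQ]

end TensorSetup

theorem stmt5_refE_corner_general
    (ts : TensorSetup H1 H2 H)
    (P Q Pt Qt : H →L[ℂ] H)
    (hQ : IsSelfAdjoint Q)
    (hPt2 : Pt ∘L Pt = Pt)
    (hQt : IsSelfAdjoint Qt) (hQt2 : Qt ∘L Qt = Qt)
    (hPker : LinearMap.ker (Pt : H →ₗ[ℂ] H) =
      (Submodule.span ℂ {z | ∃ ξ x, z = ts.t ξ x ∧ P z = 0}).topologicalClosure)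
    (hQker : LinearMap.ker (Qt : H →ₗ[ℂ] H) =
      (Submodule.span ℂ {z | ∃ ξ x, z = ts.t ξ x ∧ Q z = 0}).topologicalClosure) :
    RefE ts {X | ∃ T : H →L[ℂ] H, X = Q ∘L T ∘L P} =
      {X | ∃ T : H →L[ℂ] H, X = Qt ∘L T ∘L Pt} := by
  ext X
  rw [ts.mem_refE_corner_iff hQ, Set.mem_ofPred_eq, exists_eq_comp_comp_iff hPt2 hQt hQt2,
    hPker, hQker, ts.closure_span_le_ker_iff, ts.closure_span_le_ker_adjoint_iff]
  simp only [or_imp, forall_and]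

/-- For projections `P, Q` on `H1 ⊗ H2`, `Ref_e (Q B(H1⊗H2) P) = Q̃ B(H1⊗H2) P̃`,
where for a projection `L`, `L̃` is the orthogonal projection onto
`{ξ ⊗ x : L(ξ ⊗ x) = 0}ᗮ`; equivalently, `L̃` is the selfadjoint idempotent
whose kernel is the closed linear span of the elementary tensors killed by `L`. -/
theorem stmt5_refE_corner
    (ts : TensorSetup H1 H2 H)
    (P Q Pt Qt : H →L[ℂ] H)
    (hP : IsSelfAdjoint P) (hP2 : P ∘L P = P)
    (hQ : IsSelfAdjoint Q) (hQ2 : Q ∘L Q = Q)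
    (hPt : IsSelfAdjoint Pt) (hPt2 : Pt ∘L Pt = Pt)
    (hQt : IsSelfAdjoint Qt) (hQt2 : Qt ∘L Qt = Qt)
    (hPker : LinearMap.ker (Pt : H →ₗ[ℂ] H) =
      (Submodule.span ℂ {z | ∃ ξ x, z = ts.t ξ x ∧ P z = 0}).topologicalClosure)
    (hQker : LinearMap.ker (Qt : H →ₗ[ℂ] H) =
      (Submodule.span ℂ {z | ∃ ξ x, z = ts.t ξ x ∧ Q z = 0}).topologicalClosure) :
    RefE ts {X | ∃ T : H →L[ℂ] H, X = Q ∘L T ∘L P} =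
      {X | ∃ T : H →L[ℂ] H, X = Qt ∘L T ∘L Pt} :=
  stmt5_refE_corner_general ts P Q Pt Qt hQ hPt2 hQt hQt2 hPker hQker
end
end

section
/- Let H = ℓ²(ℤ₊, K) for a Hilbert space K and let R be the isometric shift R(x_0, x_1, ...) = (0, x_0, x_1, ...). If A ∈ B(H) commutes with R, then the norm of A equals its essential norm: ‖A‖ = inf{‖A + C‖ : C compact}. In particular, no nonzero compact operator commutes with R. -/
/-!
Since `A` commutes with the isometry `R`, for every compact `C` and every `n`,
`‖A x‖ = ‖A (Rⁿ x)‖ ≤ ‖A + C‖ ‖x‖ + ‖C (Rⁿ x)‖`.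
The vectors `Rⁿ x` are bounded and weakly null (their first `n` coordinates vanish),
and a compact operator maps such a sequence to a norm null one, so `‖A‖ ≤ ‖A + C‖`.
Taking `C = 0` and `C = -A` gives both claims.
-/

open Filter Topology Finset
open scoped InnerProductSpace

theorem norm_pow_apply_of_forall_norm_apply_eq {R E : Type*} [Semiring R]
    [SeminormedAddCommGroup E] [Module R E] {V : E →L[R] E} (hV : ∀ x, ‖V x‖ = ‖x‖)
    (n : ℕ) (x : E) : ‖(V ^ n) x‖ = ‖x‖ := by
  induction n with
  | zero => simp
  | succ n ih => rw [pow_succ', mul_apply_eq_comp, hV, ih]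

section CompactOperator

variable {𝕜 E F : Type*} [RCLike 𝕜] [NormedAddCommGroup E] [InnerProductSpace 𝕜 E]
  [CompleteSpace E] [NormedAddCommGroup F] [InnerProductSpace 𝕜 F] [CompleteSpace F]

theorem IsCompactOperator.tendsto_zero_of_tendsto_inner {C : E →L[𝕜] F}
    (hC : IsCompactOperator C) {y : ℕ → E} (hy : Bornology.IsBounded (Set.range y))
    (hw : ∀ w, Tendsto (fun n => ⟪y n, w⟫_𝕜) atTop (𝓝 0)) :
    Tendsto (fun n => C (y n)) atTop (𝓝 0) := by
  have hK : IsCompact (closure (C '' Set.range y)) :=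
    hC.isCompact_closure_image_of_bounded (f := (C : E →ₗ[𝕜] F)) hy
  refine tendsto_of_subseq_tendsto fun ns hns => ?_
  obtain ⟨z, -, φ, hφ, hφz⟩ := hK.tendsto_subseq (x := fun n => C (y (ns n)))
    fun n => subset_closure ⟨y (ns n), ⟨_, rfl⟩, rfl⟩
  -- a subsequential limit `z` satisfies `⟪z, z⟫ = lim ⟪y, C† z⟫ = 0`
  have h_to_self : Tendsto (fun n => ⟪C (y (ns (φ n))), z⟫_𝕜) atTop (𝓝 ⟪z, z⟫_𝕜) :=
    hφz.inner tendsto_const_nhds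
  have h_to_zero : Tendsto (fun n => ⟪C (y (ns (φ n))), z⟫_𝕜) atTop (𝓝 0) := by
    simpa only [Function.comp_def, C.adjoint_inner_right] using
      (hw (C.adjoint z)).comp (hns.comp hφ.tendsto_atTop)
  rw [inner_self_eq_zero.mp (tendsto_nhds_unique h_to_self h_to_zero)] at hφz
  exact ⟨φ, hφz⟩

theorem norm_le_norm_add_of_commute_of_isometry {V A C : E →L[𝕜] E} (hV : ∀ x, ‖V x‖ = ‖x‖)
    (hVw : ∀ x w, Tendsto (fun n => ⟪(V ^ n) x, w⟫_𝕜) atTop (𝓝 0)) (hA : Commute A V)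
    (hC : IsCompactOperator C) : ‖A‖ ≤ ‖A + C‖ := by
  refine ContinuousLinearMap.opNorm_le_bound _ (norm_nonneg _) fun x => ?_
  have hVn := norm_pow_apply_of_forall_norm_apply_eq hV
  have hCV : Tendsto (fun n => ‖C ((V ^ n) x)‖) atTop (𝓝 0) := by
    refine tendsto_zero_iff_norm_tendsto_zero.mp (hC.tendsto_zero_of_tendsto_inner ?_ (hVw x))
    refine isBounded_iff_forall_norm_le.mpr ⟨‖x‖, ?_⟩
    rintro _ ⟨n, rfl⟩
    exact (hVn n x).le
  have hbound : ∀ n, ‖A x‖ ≤ ‖A + C‖ * ‖x‖ + ‖C ((V ^ n) x)‖ := fun n =>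
    calc ‖A x‖ = ‖A ((V ^ n) x)‖ := by
          rw [← hVn n (A x), ← mul_apply_eq_comp, ← (hA.pow_right n).eq, mul_apply_eq_comp]
      _ = ‖(A + C) ((V ^ n) x) - C ((V ^ n) x)‖ := by simp
      _ ≤ ‖(A + C) ((V ^ n) x)‖ + ‖C ((V ^ n) x)‖ := norm_sub_le _ _
      _ ≤ ‖A + C‖ * ‖x‖ + ‖C ((V ^ n) x)‖ := by
          grw [(A + C).le_opNorm, hVn]
  exact ge_of_tendsto (by simpa using hCV.const_add (‖A + C‖ * ‖x‖))
    (Eventually.of_forall hbound)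

end CompactOperator

namespace lp

variable {𝕜 : Type*} [RCLike 𝕜] {G : ℕ → Type*} [∀ i, NormedAddCommGroup (G i)]
  [∀ i, InnerProductSpace 𝕜 (G i)]

theorem inner_eq_inner_sub_sum_single {f w : lp G 2} {n : ℕ} (hf : ∀ i < n, f i = 0) :
    ⟪f, w⟫_𝕜 = ⟪f, w - ∑ i ∈ range n, lp.single 2 i (w i)⟫_𝕜 := by
  rw [inner_sub_right, inner_sum, sum_eq_zero fun i hi => ?_, sub_zero]
  rw [inner_single_right, hf i (mem_range.mp hi), inner_zero_left]

theorem tendsto_inner_of_apply_eq_zero_of_lt {y : ℕ → lp G 2} {M : ℝ} (hM : ∀ n, ‖y n‖ ≤ M)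
    (hy : ∀ n, ∀ i < n, y n i = 0) (w : lp G 2) :
    Tendsto (fun n => ⟪y n, w⟫_𝕜) atTop (𝓝 0) := by
  have htail : Tendsto (fun n => ‖w - ∑ i ∈ range n, lp.single 2 i (w i)‖) atTop (𝓝 0) := by
    simpa using ((lp.hasSum_single ENNReal.ofNat_ne_top w).tendsto_sum_nat.const_sub w).norm
  refine squeeze_zero_norm (fun n => ?_) (by simpa using htail.const_mul M)
  rw [inner_eq_inner_sub_sum_single (hy n)]
  exact (norm_inner_le_norm _ _).trans (by gcongr; exact hM n)

end lp

section Shift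

variable {𝕜 K : Type*} [RCLike 𝕜] [NormedAddCommGroup K] [InnerProductSpace 𝕜 K]
  {R : lp (fun _ : ℕ => K) 2 →L[𝕜] lp (fun _ : ℕ => K) 2}

theorem inner_map_map_of_apply_zero_of_apply_succ
    (hR0 : ∀ x : lp (fun _ : ℕ => K) 2, R x 0 = 0)
    (hRs : ∀ (x : lp (fun _ : ℕ => K) 2) (n : ℕ), R x (n + 1) = x n)
    (x y : lp (fun _ : ℕ => K) 2) :
    ⟪R x, R y⟫_𝕜 = ⟪x, y⟫_𝕜 := by
  have h := (hasSum_nat_add_iff' (f := fun i => ⟪R x i, R y i⟫_𝕜) 1).mpr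
    (lp.hasSum_inner (R x) (R y))
  simp only [hRs, range_one, sum_singleton, hR0, inner_zero_left, sub_zero] at h
  exact h.unique (lp.hasSum_inner x y)

theorem pow_apply_eq_zero_of_lt (hR0 : ∀ x : lp (fun _ : ℕ => K) 2, R x 0 = 0)
    (hRs : ∀ (x : lp (fun _ : ℕ => K) 2) (n : ℕ), R x (n + 1) = x n)
    (x : lp (fun _ : ℕ => K) 2) {n i : ℕ} (hi : i < n) : (R ^ n) x i = 0 := by
  induction n generalizing i with
  | zero => omega
  | succ n ih =>
    rw [pow_succ', mul_apply_eq_comp]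
    cases i with
    | zero => exact hR0 _
    | succ i => rw [hRs, ih (by omega)]

theorem norm_map_of_apply_zero_of_apply_succ (hR0 : ∀ x : lp (fun _ : ℕ => K) 2, R x 0 = 0)
    (hRs : ∀ (x : lp (fun _ : ℕ => K) 2) (n : ℕ), R x (n + 1) = x n)
    (x : lp (fun _ : ℕ => K) 2) : ‖R x‖ = ‖x‖ :=
  (LinearMap.norm_map_iff_inner_map_map R).mpr
    (inner_map_map_of_apply_zero_of_apply_succ hR0 hRs) x

theorem tendsto_inner_pow_apply_of_apply_zero_of_apply_succ
    (hR0 : ∀ x : lp (fun _ : ℕ => K) 2, R x 0 = 0)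
    (hRs : ∀ (x : lp (fun _ : ℕ => K) 2) (n : ℕ), R x (n + 1) = x n)
    (x w : lp (fun _ : ℕ => K) 2) : Tendsto (fun n : ℕ => ⟪(R ^ n) x, w⟫_𝕜) atTop (𝓝 0) := by
  have hnorm :=
    norm_pow_apply_of_forall_norm_apply_eq (norm_map_of_apply_zero_of_apply_succ hR0 hRs)
  exact lp.tendsto_inner_of_apply_eq_zero_of_lt (fun n => (hnorm n x).le)
    (fun _ _ hi => pow_apply_eq_zero_of_lt hR0 hRs x hi) w

end Shift

/-- On `H = ℓ²(ℤ₊, K)` with the isometric shift `R(x₀,x₁,…) = (0,x₀,x₁,…)`,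
any operator `A` commuting with `R` has norm equal to its essential norm
`inf{‖A + C‖ : C compact}`; in particular the only compact operator commuting
with `R` is `0`. -/
theorem stmt13_norm_eq_essential_norm
    {K : Type*} [NormedAddCommGroup K] [InnerProductSpace ℂ K] [CompleteSpace K]
    (R : lp (fun _ : ℕ => K) 2 →L[ℂ] lp (fun _ : ℕ => K) 2)
    (hR0 : ∀ x : lp (fun _ : ℕ => K) 2, (R x) 0 = 0)
    (hRs : ∀ (x : lp (fun _ : ℕ => K) 2) (n : ℕ), (R x) (n + 1) = x n)
    (A : lp (fun _ : ℕ => K) 2 →L[ℂ] lp (fun _ : ℕ => K) 2)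
    (hA : A ∘L R = R ∘L A) :
    ‖A‖ = sInf {r : ℝ | ∃ C : lp (fun _ : ℕ => K) 2 →L[ℂ] lp (fun _ : ℕ => K) 2,
        IsCompactOperator C ∧ r = ‖A + C‖} ∧
      (IsCompactOperator A → A = 0) := by
  have key : ∀ C : lp (fun _ : ℕ => K) 2 →L[ℂ] lp (fun _ : ℕ => K) 2,
      IsCompactOperator C → ‖A‖ ≤ ‖A + C‖ := fun C =>
    norm_le_norm_add_of_commute_of_isometry (norm_map_of_apply_zero_of_apply_succ hR0 hRs)
      (tendsto_inner_pow_apply_of_apply_zero_of_apply_succ hR0 hRs) hA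
  refine ⟨(IsLeast.csInf_eq ⟨?_, ?_⟩).symm, fun hAc => norm_le_zero_iff.mp ?_⟩
  · exact ⟨0, isCompactOperator_zero, by rw [add_zero]⟩
  · rintro _ ⟨C, hC, rfl⟩
    exact key C hC
  · simpa using key (-A) hAc.neg
end

section
/- Let λ = e^{2πiθ} with θ irrational, S the unilateral shift on H² and V ∈ B(H²) the composition operator (Vf)(z) = f(λz). If a closed subspace K ⊆ H² is invariant under both S and SV, then K is invariant under V, and consequently K = z^k H² for some k ∈ ℤ₊ (or K = {0}). -/
/-!
Let `W = K ⊖ S K` be the wandering subspace of the shift on `K`. Translating an orthonormal family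
of `W` by the powers of `S` gives an orthonormal family again, and Bessel's inequality against the
basis vectors then shows `dim W ≤ 1` (the discrete core of Beurling's theorem). If `k` is the first
index at which `K` has a nonzero coordinate, a vector of `W` is therefore determined by its `k`-th
coordinate. For `w ∈ W` the vector `S V w ∈ K` has vanishing `k`-th coordinate, so its component
in `W` vanishes, `S V w ∈ S K` and `V w ∈ K`; as `K = W + S K` and `V S = λ S V`, this gives
`V K ⊆ K`. Finally, since `θ` is irrational the eigenvalues `λⁿ` of `V` are distinct, so by the
mean ergodic theorem the averages of `(λ⁻ᵏ V)ⁿ f` converge to `⟪b k, f⟫ • b k`. This puts `b k`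
in `K`, whence `K` is the closed span of the `b n`, `n ≥ k`.
-/

open Filter Finset
open scoped Topology

section

variable {ι 𝕜 E F : Type*} [RCLike 𝕜] [NormedAddCommGroup E] [InnerProductSpace 𝕜 E]
  [NormedAddCommGroup F] [InnerProductSpace 𝕜 F]

local notation "⟪" x ", " y "⟫" => inner 𝕜 x y

theorem Orthonormal.smul_of_norm_eq_one {v : ι → E} (hv : Orthonormal 𝕜 v)
    {c : ι → 𝕜} (hc : ∀ i, ‖c i‖ = 1) : Orthonormal 𝕜 fun i => c i • v i :=
  ⟨fun i => by rw [norm_smul, hc, hv.1, one_mul], fun i j hij => by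
    show ⟪c i • v i, c j • v j⟫ = 0
    rw [inner_smul_left, inner_smul_right, hv.2 hij, mul_zero, mul_zero]⟩

namespace HilbertBasis

variable (b : HilbertBasis ι 𝕜 E)

theorem ext_continuousLinearMap {A B : E →L[𝕜] F} (h : ∀ i, A (b i) = B (b i)) : A = B :=
  ContinuousLinearMap.ext_on (Submodule.dense_iff_topologicalClosure_eq_top.mpr b.dense_span)
    (by rintro _ ⟨i, rfl⟩; exact h i)

theorem ext_inner {x y : E} (h : ∀ i, ⟪b i, x⟫ = ⟪b i, y⟫) : x = y :=
  b.repr.injective <| lp.ext <| funext fun i => by simp only [b.repr_apply_apply, h]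

theorem mem_of_forall_mem_or_inner_eq_zero {K : Submodule 𝕜 E} (hK : IsClosed (K : Set E))
    {x : E} (h : ∀ i, b i ∈ K ∨ ⟪b i, x⟫ = 0) : x ∈ K := by
  refine hK.mem_of_tendsto (b.hasSum_repr x) (Eventually.of_forall fun s => ?_)
  refine K.sum_mem fun i _ => ?_
  rcases h i with hi | hi
  · exact K.smul_mem _ hi
  · rw [b.repr_apply_apply, hi, zero_smul]; exact K.zero_mem

theorem hasSum_norm_inner_sq (x : E) : HasSum (fun i => ‖⟪b i, x⟫‖ ^ 2) (‖x‖ ^ 2) := by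
  have h := (b.hasSum_inner_mul_inner x x).mapL (RCLike.reCLM (K := 𝕜))
  simp only [RCLike.reCLM_apply, inner_self_eq_norm_sq] at h
  refine h.congr_fun fun i => ?_
  rw [← inner_conj_symm, RCLike.mul_conj, RCLike.norm_conj]
  norm_cast

theorem inner_apply_of_apply_eq_smul {V : E →L[𝕜] E} {d : ι → 𝕜}
    (hV : ∀ i, V (b i) = d i • b i) (i : ι) (x : E) : ⟪b i, V x⟫ = d i * ⟪b i, x⟫ := by
  classical
  refine congrArg (· x) (b.ext_continuousLinearMap
    (A := (innerSL 𝕜 (b i)).comp V) (B := d i • innerSL 𝕜 (b i)) fun j => ?_)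
  simp only [ContinuousLinearMap.comp_apply, FunLike.coe_smul, Pi.smul_apply, innerSL_apply_apply,
    hV, inner_smul_right, orthonormal_iff_ite.mp b.orthonormal, smul_eq_mul]
  split_ifs with h <;> simp [h]

theorem inner_map_map_of_orthonormal [CompleteSpace E] [CompleteSpace F] (T : E →L[𝕜] F)
    (hT : Orthonormal 𝕜 (T ∘ b)) (x y : E) : ⟪T x, T y⟫ = ⟪x, y⟫ := by
  classical
  refine T.inner_map_map_iff_adjoint_comp_self.mpr (b.ext_continuousLinearMap fun i => ?_) x y
  refine b.ext_inner fun j => ?_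
  rw [ContinuousLinearMap.comp_apply, ContinuousLinearMap.adjoint_inner_right]
  exact (orthonormal_iff_ite.mp hT j i).trans (orthonormal_iff_ite.mp b.orthonormal j i).symm

theorem tendsto_birkhoffAverage_of_apply_eq_smul [CompleteSpace E] {T : E →L[𝕜] E} {c : ι → 𝕜}
    (hT : ∀ i, T (b i) = c i • b i) (hc : ∀ i, ‖c i‖ = 1) {k : ι} (hck : c k = 1)
    (hc1 : ∀ i ≠ k, c i ≠ 1) (x : E) :
    Tendsto (birkhoffAverage 𝕜 T _root_.id · x) atTop (𝓝 (⟪b k, x⟫ • b k)) := by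
  classical
  have hnorm : ‖T‖ ≤ 1 := by
    have hiso := b.inner_map_map_of_orthonormal T <| by
      simpa only [Function.comp_def, hT] using b.orthonormal.smul_of_norm_eq_one hc
    refine T.opNorm_le_bound zero_le_one fun y => ?_
    rw [one_mul]
    exact ((LinearMap.norm_map_iff_inner_map_map (T : E →ₗ[𝕜] E)).mpr hiso y).le
  set M := T.eqLocus (1 : E →L[𝕜] E)
  have hfix : ∀ y ∈ M, ∀ i ≠ k, ⟪b i, y⟫ = 0 := by
    intro y hy i hi
    have h := congrArg (⟪b i, ·⟫) (LinearMap.mem_eqLocus.mp hy)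
    simp only [ContinuousLinearMap.coe_coe, b.inner_apply_of_apply_eq_smul hT] at h
    have : (c i - 1) * ⟪b i, y⟫ = 0 := by rw [sub_mul, one_mul, h]; exact sub_self _
    exact (mul_eq_zero.mp this).resolve_left (sub_ne_zero.mpr (hc1 i hi))
  have hbk : b k ∈ M := by
    rw [LinearMap.mem_eqLocus, ContinuousLinearMap.coe_coe, hT, hck, one_smul]
    rfl
  convert T.tendsto_birkhoffAverage_orthogonalProjection hnorm x using 2
  refine b.ext_inner fun i => ?_
  rw [inner_smul_right, orthonormal_iff_ite.mp b.orthonormal]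
  split_ifs with hi
  · subst hi
    rw [mul_one]
    exact (M.inner_orthogonalProjectionOnto_eq_of_mem_left ⟨b i, hbk⟩ x).symm
  · rw [mul_zero, hfix _ (M.orthogonalProjectionOnto x).2 i hi]

end HilbertBasis

end

section

variable {ι 𝕜 E : Type*} [RCLike 𝕜] [NormedAddCommGroup E] [InnerProductSpace 𝕜 E]

local notation "⟪" x ", " y "⟫" => inner 𝕜 x y

theorem HilbertBasis.exists_min_inner_ne_zero (b : HilbertBasis ℕ 𝕜 E) {K : Submodule 𝕜 E}
    (hK : K ≠ ⊥) : ∃ k, (∀ x ∈ K, ∀ j < k, ⟪b j, x⟫ = 0) ∧ ∃ f ∈ K, ⟪b k, f⟫ ≠ 0 := by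
  classical
  have hex : ∃ k, ∃ f ∈ K, ⟪b k, f⟫ ≠ 0 := by
    obtain ⟨f, hf, hf0⟩ := (Submodule.ne_bot_iff K).mp hK
    by_contra! h
    exact hf0 (b.ext_inner fun k => by rw [h k f hf, inner_zero_right])
  refine ⟨Nat.find hex, fun x hx j hj => ?_, Nat.find_spec hex⟩
  by_contra h
  exact Nat.find_min hex hj ⟨x, hx, h⟩

def wanderingSubspace (K : Submodule 𝕜 E) (T : E →L[𝕜] E) : Submodule 𝕜 E :=
  (K.map (T : E →ₗ[𝕜] E))ᗮ ⊓ K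

variable {K : Submodule 𝕜 E} {T : E →L[𝕜] E}

theorem pow_apply_mem (hK : ∀ x ∈ K, T x ∈ K) (n : ℕ) {x : E} (hx : x ∈ K) : (T ^ n) x ∈ K := by
  induction n with
  | zero => exact hx
  | succ n ih => rw [pow_succ', mul_apply_eq_comp]; exact hK _ ih

theorem inner_pow_apply_pow_apply (hT : ∀ x y, ⟪T x, T y⟫ = ⟪x, y⟫) (n : ℕ) (x y : E) :
    ⟪(T ^ n) x, (T ^ n) y⟫ = ⟪x, y⟫ := by
  induction n with
  | zero => rfl
  | succ n ih => rw [pow_succ', mul_apply_eq_comp, mul_apply_eq_comp, hT, ih]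

theorem inner_pow_apply_eq_zero_of_mem_wandering (hT : ∀ x y, ⟪T x, T y⟫ = ⟪x, y⟫)
    (hK : ∀ x ∈ K, T x ∈ K) {w x : E} (hw : w ∈ wanderingSubspace K T) (hx : x ∈ K) {n m : ℕ}
    (hnm : n < m) : ⟪(T ^ n) w, (T ^ m) x⟫ = 0 := by
  obtain ⟨d, rfl⟩ := Nat.exists_eq_add_of_lt hnm
  rw [add_assoc, pow_add, mul_apply_eq_comp, inner_pow_apply_pow_apply hT, pow_succ',
    mul_apply_eq_comp]
  exact Submodule.inner_left_of_mem_orthogonal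
    (Submodule.mem_map_of_mem (pow_apply_mem hK d hx)) hw.1

theorem orthonormal_pow_apply_of_mem_wandering (hT : ∀ x y, ⟪T x, T y⟫ = ⟪x, y⟫)
    (hK : ∀ x ∈ K, T x ∈ K) {u : ι → E} (hu : Orthonormal 𝕜 u)
    (huK : ∀ i, u i ∈ wanderingSubspace K T) :
    Orthonormal 𝕜 fun p : ι × ℕ => (T ^ p.2) (u p.1) := by
  classical
  rw [orthonormal_iff_ite]
  rintro ⟨i, n⟩ ⟨j, m⟩
  rcases lt_trichotomy n m with hnm | rfl | hnm
  · rw [inner_pow_apply_eq_zero_of_mem_wandering hT hK (huK i) (huK j).2 hnm,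
      if_neg (by simp [hnm.ne])]
  · rw [inner_pow_apply_pow_apply hT, orthonormal_iff_ite.mp hu]
    simp
  · rw [← inner_conj_symm, inner_pow_apply_eq_zero_of_mem_wandering hT hK (huK j) (huK i).2 hnm,
      map_zero, if_neg (by simp [hnm.ne'])]

theorem exists_mem_wandering_add_apply (hK : ∀ x ∈ K, T x ∈ K)
    [(K.map (T : E →ₗ[𝕜] E)).HasOrthogonalProjection] {x : E} (hx : x ∈ K) :
    ∃ w ∈ wanderingSubspace K T, ∃ y ∈ K, x = w + T y := by
  have hle : K.map (T : E →ₗ[𝕜] E) ≤ K := Submodule.map_le_iff_le_comap.mpr hK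
  rw [← Submodule.sup_orthogonal_inf_of_hasOrthogonalProjection hle, Submodule.mem_sup] at hx
  obtain ⟨_, ⟨y, hy, rfl⟩, w, hw, rfl⟩ := hx
  exact ⟨w, hw, y, hy, add_comm _ _⟩

end

section Shift

variable {𝕜 E : Type*} [RCLike 𝕜] [NormedAddCommGroup E] [InnerProductSpace 𝕜 E]
  (b : HilbertBasis ℕ 𝕜 E) {S : E →L[𝕜] E} (hS : ∀ n, S (b n) = b (n + 1))

local notation "⟪" x ", " y "⟫" => inner 𝕜 x y

include hS

theorem shift_pow_basis (m n : ℕ) : (S ^ n) (b m) = b (m + n) := by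
  induction n with
  | zero => rfl
  | succ n ih => rw [pow_succ', mul_apply_eq_comp, ih, hS, add_assoc]

theorem eq_topologicalClosure_span_basis {K : Submodule 𝕜 E} (hKc : IsClosed (K : Set E))
    (hKS : ∀ x ∈ K, S x ∈ K) {k : ℕ} (hlow : ∀ x ∈ K, ∀ j < k, ⟪b j, x⟫ = 0) (hbk : b k ∈ K) :
    K = (Submodule.span 𝕜 {x : E | ∃ n : ℕ, k ≤ n ∧ x = b n}).topologicalClosure := by
  refine le_antisymm (fun x hx => ?_) (Submodule.topologicalClosure_minimal _ ?_ hKc)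
  · refine b.mem_of_forall_mem_or_inner_eq_zero (Submodule.isClosed_topologicalClosure _)
      fun n => ?_
    by_cases hn : k ≤ n
    · exact Or.inl (Submodule.le_topologicalClosure _ (Submodule.subset_span ⟨n, hn, rfl⟩))
    · exact Or.inr (hlow x hx n (not_le.mp hn))
  · rw [Submodule.span_le]
    rintro _ ⟨n, hn, rfl⟩
    obtain ⟨d, rfl⟩ := Nat.exists_eq_add_of_le hn
    rw [← shift_pow_basis b hS]
    exact pow_apply_mem hKS d hbk

variable [CompleteSpace E] {K : Submodule 𝕜 E} (hK : ∀ x ∈ K, S x ∈ K)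

theorem inner_shift_shift (x y : E) : ⟪S x, S y⟫ = ⟪x, y⟫ :=
  b.inner_map_map_of_orthonormal S (by
    simpa only [Function.comp_def, hS] using b.orthonormal.comp _ (add_left_injective 1)) x y

theorem inner_basis_shift_eq_zero {k : ℕ} {x : E} (hx : ∀ j < k, ⟪b j, x⟫ = 0) :
    ⟪b k, S x⟫ = 0 := by
  cases k with
  | zero =>
    have h0 : (innerSL 𝕜 (b 0)).comp S = 0 := b.ext_continuousLinearMap fun n => by
      simp [hS, orthonormal_iff_ite.mp b.orthonormal]
    exact congrArg (· x) h0
  | succ j => rw [← hS, inner_shift_shift b hS, hx j j.lt_succ_self]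

theorem inner_shift_pow_basis {n m : ℕ} (h : n ≤ m) (x : E) :
    ⟪(S ^ n) x, b m⟫ = ⟪x, b (m - n)⟫ := by
  obtain ⟨d, rfl⟩ := Nat.exists_eq_add_of_le h
  rw [add_comm, ← shift_pow_basis b hS, inner_pow_apply_pow_apply (inner_shift_shift b hS),
    Nat.add_sub_cancel]

theorem sum_range_norm_inner_shift_pow (x : E) (m : ℕ) :
    ∑ n ∈ range (m + 1), ‖⟪(S ^ n) x, b m⟫‖ ^ 2 = ∑ n ∈ range (m + 1), ‖⟪b n, x⟫‖ ^ 2 := by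
  rw [← sum_range_reflect (fun n => ‖⟪b n, x⟫‖ ^ 2)]
  refine sum_congr rfl fun n hn => ?_
  rw [inner_shift_pow_basis b hS (by rw [mem_range] at hn; omega), norm_inner_symm,
    Nat.add_sub_cancel]

theorem isometry_shift : Isometry S :=
  AddMonoidHomClass.isometry_of_norm S <|
    (LinearMap.norm_map_iff_inner_map_map (S : E →ₗ[𝕜] E)).mpr (inner_shift_shift b hS)

theorem hasOrthogonalProjection_map_shift (hKc : IsClosed (K : Set E)) :
    (K.map (S : E →ₗ[𝕜] E)).HasOrthogonalProjection := by
  have hc : IsComplete (K.map (S : E →ₗ[𝕜] E) : Set E) := by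
    rw [Submodule.map_coe]
    exact (isComplete_image_iff (isometry_shift b hS).isUniformInducing).mpr hKc.isComplete
  have := hc.completeSpace_coe
  infer_instance

include hK

theorem subsingleton_of_orthonormal_mem_wandering {ι : Type*} {u : ι → E} (hu : Orthonormal 𝕜 u)
    (huK : ∀ i, u i ∈ wanderingSubspace K S) : Subsingleton ι := by
  classical
  refine ⟨fun i j => by_contra fun hij => ?_⟩
  have hF := orthonormal_pow_apply_of_mem_wandering (inner_shift_shift b hS) hK hu huK
  have hle : ∀ m, ∑ n ∈ range (m + 1), (‖⟪b n, u i⟫‖ ^ 2 + ‖⟪b n, u j⟫‖ ^ 2) ≤ 1 := by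
    intro m
    have := hF.sum_inner_products_le (b m) (s := {i, j} ×ˢ range (m + 1))
    rw [sum_product, sum_pair hij] at this
    dsimp only at this
    rwa [sum_range_norm_inner_shift_pow b hS, sum_range_norm_inner_shift_pow b hS,
      ← sum_add_distrib, b.orthonormal.1, one_pow] at this
  have hlim := (((b.hasSum_norm_inner_sq (u i)).add
    (b.hasSum_norm_inner_sq (u j))).tendsto_sum_nat).comp (tendsto_add_atTop_nat 1)
  have := le_of_tendsto' hlim hle
  rw [hu.1 i, hu.1 j] at this
  norm_num at this

theorem eq_inner_smul_of_mem_wandering {φ w : E} (hφ : φ ∈ wanderingSubspace K S)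
    (hφ1 : ‖φ‖ = 1) (hw : w ∈ wanderingSubspace K S) : w = ⟪φ, w⟫ • φ := by
  set w' := w - ⟪φ, w⟫ • φ with hw'_def
  by_contra hne
  have hw' : w' ≠ 0 := sub_ne_zero.mpr hne
  have hperp : ⟪φ, w'⟫ = 0 := by
    rw [hw'_def, inner_sub_right, inner_smul_right, inner_self_eq_norm_sq_to_K, hφ1]
    simp
  have hu : Orthonormal 𝕜 ![φ, (‖w'‖⁻¹ : 𝕜) • w'] := by
    refine ⟨fun i => ?_, fun i j hij => ?_⟩
    · fin_cases i
      · exact hφ1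
      · simp [norm_smul, hw']
    · fin_cases i <;> fin_cases j <;> simp_all [inner_smul_right, inner_smul_left]
      rw [← inner_conj_symm, hperp, map_zero]
  have := subsingleton_of_orthonormal_mem_wandering b hS hK hu fun i => by
    fin_cases i
    · exact hφ
    · exact Submodule.smul_mem _ _ (Submodule.sub_mem _ hw (Submodule.smul_mem _ _ hφ))
  exact zero_ne_one (Subsingleton.elim (0 : Fin 2) 1)

theorem eq_zero_of_mem_wandering_of_inner_eq_zero (hKc : IsClosed (K : Set E)) {k : ℕ}
    (hlow : ∀ x ∈ K, ∀ j < k, ⟪b j, x⟫ = 0) {f : E} (hf : f ∈ K) (hfk : ⟪b k, f⟫ ≠ 0)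
    {w : E} (hw : w ∈ wanderingSubspace K S) (hwk : ⟪b k, w⟫ = 0) : w = 0 := by
  have := hasOrthogonalProjection_map_shift b hS hKc
  obtain ⟨φ, hφ, y, hy, rfl⟩ := exists_mem_wandering_add_apply hK hf
  rw [inner_add_right, inner_basis_shift_eq_zero b hS (hlow y hy), add_zero] at hfk
  have hφ0 : φ ≠ 0 := by rintro rfl; simp at hfk
  have hφ1 : ‖(‖φ‖⁻¹ : 𝕜) • φ‖ = 1 := norm_smul_inv_norm hφ0
  have hwφ := eq_inner_smul_of_mem_wandering b hS hK (Submodule.smul_mem _ _ hφ) hφ1 hw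
  rw [hwφ, inner_smul_right, inner_smul_right, mul_eq_zero, mul_eq_zero] at hwk
  rcases hwk with hc | hc | hc
  · rw [hwφ, hc, zero_smul]
  · exact absurd hc (by simp [hφ0])
  · exact absurd hc hfk

end Shift

section Rotation

variable {𝕜 E : Type*} [RCLike 𝕜] [NormedAddCommGroup E] [InnerProductSpace 𝕜 E]
  (b : HilbertBasis ℕ 𝕜 E) {V : E →L[𝕜] E} {Λ : 𝕜} (hV : ∀ n, V (b n) = Λ ^ n • b n)
  {K : Submodule 𝕜 E}

local notation "⟪" x ", " y "⟫" => inner 𝕜 x y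

include hV

theorem rotation_shift_comm {S : E →L[𝕜] E} (hS : ∀ n, S (b n) = b (n + 1)) (x : E) :
    V (S x) = Λ • S (V x) :=
  congrArg (· x) <| b.ext_continuousLinearMap (A := V.comp S) (B := Λ • S.comp V) fun n => by
    simp [hS, hV, pow_succ', smul_smul]

variable [CompleteSpace E]

theorem apply_mem_of_shift_invariant {S : E →L[𝕜] E} (hS : ∀ n, S (b n) = b (n + 1))
    (hKc : IsClosed (K : Set E)) (hKS : ∀ x ∈ K, S x ∈ K) (hKSV : ∀ x ∈ K, S (V x) ∈ K) :
    ∀ x ∈ K, V x ∈ K := by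
  rcases eq_or_ne K ⊥ with rfl | hK0
  · intro x hx
    rw [(Submodule.mem_bot 𝕜).mp hx, map_zero]
    exact Submodule.zero_mem _
  obtain ⟨k, hlow, f, hf, hfk⟩ := b.exists_min_inner_ne_zero hK0
  have := hasOrthogonalProjection_map_shift b hS hKc
  have hVw : ∀ w ∈ wanderingSubspace K S, V w ∈ K := by
    intro w hw
    obtain ⟨w', hw', y, hy, hSVw⟩ := exists_mem_wandering_add_apply hKS (hKSV w hw.2)
    have hw'k : ⟪b k, w'⟫ = 0 := by
      have h := inner_basis_shift_eq_zero b hS (x := V w) fun j hj => by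
        rw [b.inner_apply_of_apply_eq_smul hV, hlow w hw.2 j hj, mul_zero]
      rwa [hSVw, inner_add_right, inner_basis_shift_eq_zero b hS (hlow y hy), add_zero] at h
    rw [eq_zero_of_mem_wandering_of_inner_eq_zero b hS hKS hKc hlow hf hfk hw' hw'k,
      zero_add] at hSVw
    rwa [(isometry_shift b hS).injective hSVw]
  intro x hx
  obtain ⟨w, hw, y, hy, rfl⟩ := exists_mem_wandering_add_apply hKS hx
  rw [map_add, rotation_shift_comm b hV hS]
  exact K.add_mem (hVw w hw) (K.smul_mem _ (hKSV y hy))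

theorem basis_mem_of_apply_mem (hΛ : ‖Λ‖ = 1) (hΛinj : Function.Injective (Λ ^ · : ℕ → 𝕜))
    (hKc : IsClosed (K : Set E)) (hKV : ∀ x ∈ K, V x ∈ K) {k : ℕ} {f : E} (hf : f ∈ K)
    (hfk : ⟪b k, f⟫ ≠ 0) : b k ∈ K := by
  have hΛk : Λ ^ k ≠ 0 := pow_ne_zero _ (norm_ne_zero_iff.mp (hΛ ▸ one_ne_zero))
  set T : E →L[𝕜] E := (Λ ^ k)⁻¹ • V
  have hlim := b.tendsto_birkhoffAverage_of_apply_eq_smul (T := T)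
    (c := fun n => (Λ ^ k)⁻¹ * Λ ^ n) (fun n => by simp [T, hV, smul_smul])
    (fun n => by simp [hΛ]) (inv_mul_cancel₀ hΛk)
    (fun n hn => by rw [Ne, inv_mul_eq_one₀ hΛk]; exact fun h => hn (hΛinj h.symm)) f
  have hKT : Set.MapsTo T K K := fun x hx => K.smul_mem _ (hKV x hx)
  have hmem := hKc.mem_of_tendsto hlim <|
    Eventually.of_forall fun N => K.smul_mem _ (K.sum_mem fun n _ => hKT.iterate n hf)
  simpa [smul_smul, hfk] using K.smul_mem ⟪b k, f⟫⁻¹ hmem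

end Rotation

theorem Irrational.injective_pow_exp_two_pi_I_mul {θ : ℝ} (hθ : Irrational θ) :
    Function.Injective (Complex.exp (2 * Real.pi * Complex.I * θ) ^ · : ℕ → ℂ) := by
  intro m n h
  simp only [← Complex.exp_nat_mul] at h
  obtain ⟨j, hj⟩ := Complex.exp_eq_exp_iff_exists_int.mp h
  by_contra hmn
  have h2 : ((((m : ℤ) - n : ℤ) * θ : ℝ) : ℂ) = (j : ℝ) :=
    mul_right_cancel₀ Complex.two_pi_I_ne_zero (by push_cast; linear_combination hj)
  exact (hθ.intCast_mul (by omega : (m : ℤ) - n ≠ 0)).ne_int j (Complex.ofReal_injective h2)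

/-- Let `λ = e^{2πiθ}` with `θ` irrational, `Sh` the unilateral shift on `H²`
(with orthonormal basis `ζ_n = z^n`, so `Sh ζ_n = ζ_{n+1}`) and `V` the
composition operator `(Vf)(z) = f(λz)` (so `V ζ_n = λⁿ ζ_n`).  If a closed
subspace `K ⊆ H²` is invariant under `Sh` and `Sh V`, then it is invariant
under `V`, and consequently `K = {0}` or `K = z^k H²` for some `k ≥ 0`. -/
theorem stmt18_invariant_subspaces
    (θ : ℝ) (hθ : Irrational θ)
    {E : Type*} [NormedAddCommGroup E] [InnerProductSpace ℂ E] [CompleteSpace E]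
    (b : HilbertBasis ℕ ℂ E)
    (Sh V : E →L[ℂ] E)
    (hSh : ∀ n : ℕ, Sh (b n) = b (n + 1))
    (hV : ∀ n : ℕ, V (b n) = Complex.exp (2 * Real.pi * Complex.I * θ) ^ n • b n)
    (Ksub : Submodule ℂ E) (hKc : IsClosed (Ksub : Set E))
    (hKS : ∀ f ∈ Ksub, Sh f ∈ Ksub)
    (hKSV : ∀ f ∈ Ksub, Sh (V f) ∈ Ksub) :
    (∀ f ∈ Ksub, V f ∈ Ksub) ∧
      (Ksub = ⊥ ∨ ∃ k : ℕ, Ksub =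
        (Submodule.span ℂ {x : E | ∃ n : ℕ, k ≤ n ∧ x = b n}).topologicalClosure) := by
  have hKV := apply_mem_of_shift_invariant b hV hSh hKc hKS hKSV
  refine ⟨hKV, (eq_or_ne Ksub ⊥).imp_right fun hK0 => ?_⟩
  obtain ⟨k, hlow, f, hf, hfk⟩ := b.exists_min_inner_ne_zero hK0
  have hΛ : ‖Complex.exp (2 * Real.pi * Complex.I * θ)‖ = 1 := by
    rw [Complex.norm_exp]; simp
  have hbk := basis_mem_of_apply_mem b hV hΛ hθ.injective_pow_exp_two_pi_I_mul hKc hKV hf hfk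
  exact ⟨k, eq_topologicalClosure_span_basis b hSh hKc hKS hlow hbk⟩
end
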